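/- Let a be a positive bounded linear operator on a complex Hilbert space H with infinite spectrum (equivalently, f_m(a) ≠ 0 for all m). Then for every m ≥ 0 one has ‖a − a·p_m(a)·a‖ ≤ ‖f_{m+1}(a)‖ / (∏_{k=0}^{m} ‖f_k(a)‖) ≤ (1/4^{m+1})·‖a‖; consequently the sequence (a·p_m(a)·a) converges in operator norm to a. -/

import Mathlib

/-!
Every `f_k(a)` and `g_k(a)` is a polynomial in `a`, so everything commutes and `p_m(a)`
telescopes: `a - a p_m(a) a = f_{m+1}(a) / ∏_{k ≤ m} ‖f_k(a)‖` exactly, for every `a` (once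
some `f_k(a)` vanishes, both sides are `0`, thanks to the convention `0⁻¹ = 0`). For `b ≥ 0`
the spectrum lies in `[0, ‖b‖]`, so functional calculus for `t ↦ t (‖b‖ - t)` gives
`b (‖b‖ - b) ≥ 0` with norm at most `‖b‖² / 4`. Hence `‖f_{k+1}(a)‖ ≤ ‖f_k(a)‖² / 4`, and
each new factor of the product shrinks the error by at least `4`.
-/

section Sequences

variable {A : Type*} [CStarAlgebra A]

/-- The sequence `f₀(a) = a`, `f_{m+1}(a) = f_m(a)·(‖f_m(a)‖·1 − f_m(a))`. -/
noncomputable def fSeq (a : A) : ℕ → A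
  | 0 => a
  | m + 1 => fSeq a m * (‖fSeq a m‖ • (1 : A) - fSeq a m)

/-- The sequence `g_m(a) = ‖f_m(a)‖·1 − f_m(a)`. -/
noncomputable def gSeq (a : A) (m : ℕ) : A := ‖fSeq a m‖ • (1 : A) - fSeq a m

open Classical in
/-- The sequence `p_m(a)`: as long as `f_m(a) ≠ 0`,
`p_m(a) = (1/‖f₀(a)‖)·1 + Σ_{l=1}^m (∏_{k=0}^{l-1} g_k(a)²)/(∏_{k=0}^{l} ‖f_k(a)‖)`,
and `p_j(a) = p_M(a)` for `j > M`, where `M` is the last index with `f_M(a) ≠ 0`. -/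
noncomputable def pSeq (a : A) : ℕ → A
  | 0 => ‖a‖⁻¹ • (1 : A)
  | m + 1 =>
    if fSeq a (m + 1) = 0 then pSeq a m
    else pSeq a m +
      (((List.range (m + 2)).map fun k => ‖fSeq a k‖).prod)⁻¹ •
        ((List.range (m + 1)).map fun k => gSeq a k ^ 2).prod

end Sequences

section

variable {A : Type*} [CStarAlgebra A]

lemma fSeq_succ (a : A) (m : ℕ) : fSeq a (m + 1) = fSeq a m * gSeq a m := rfl

lemma commute_fSeq_gSeq (a : A) (m : ℕ) : Commute (fSeq a m) (gSeq a m) :=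
  ((Commute.one_right _).smul_right _).sub_right (Commute.refl _)

lemma commute_self_fSeq (a : A) : ∀ m, Commute a (fSeq a m)
  | 0 => Commute.refl a
  | m + 1 => (commute_self_fSeq a m).mul_right
      (((Commute.one_right a).smul_right _).sub_right (commute_self_fSeq a m))

lemma commute_self_gSeq (a : A) (m : ℕ) : Commute a (gSeq a m) :=
  ((Commute.one_right a).smul_right _).sub_right (commute_self_fSeq a m)

lemma mul_prod_gSeq_sq_mul (a : A) (m : ℕ) :
    a * ((List.range m).map fun k => gSeq a k ^ 2).prod * a = fSeq a m * fSeq a m := by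
  induction m with
  | zero => simp [fSeq]
  | succ m ih =>
    rw [List.prod_range_succ]
    calc a * (((List.range m).map fun k => gSeq a k ^ 2).prod * gSeq a m ^ 2) * a
        = a * ((List.range m).map fun k => gSeq a k ^ 2).prod * a * gSeq a m ^ 2 := by
          simp only [mul_assoc, ((commute_self_gSeq a m).pow_right 2).eq]
      _ = fSeq a m * gSeq a m * (fSeq a m * gSeq a m) := by
          rw [ih, sq, (commute_fSeq_gSeq a m).mul_mul_mul_comm]

lemma sub_mul_pSeq_mul (a : A) (m : ℕ) :
    a - a * pSeq a m * a =
      (((List.range (m + 1)).map fun k => ‖fSeq a k‖).prod)⁻¹ • fSeq a (m + 1) := by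
  induction m with
  | zero =>
    rcases eq_or_ne a 0 with rfl | ha
    · simp [fSeq]
    · simp [pSeq, fSeq, mul_sub, smul_sub, smul_smul, inv_mul_cancel₀ (norm_ne_zero_iff.2 ha)]
  | succ m ih =>
    by_cases hf : fSeq a (m + 1) = 0
    · simp [pSeq, hf, ih, fSeq_succ _ (m + 1)]
    · have hfs : fSeq a (m + 2) =
          ‖fSeq a (m + 1)‖ • fSeq a (m + 1) - fSeq a (m + 1) * fSeq a (m + 1) := by
        rw [fSeq_succ, gSeq, mul_sub, mul_smul_comm, mul_one]
      rw [pSeq, if_neg hf, mul_add, add_mul, mul_smul_comm, smul_mul_assoc, mul_prod_gSeq_sq_mul,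
        List.prod_range_succ _ (m + 1), hfs, smul_sub, smul_smul, mul_inv,
        inv_mul_cancel_right₀ (norm_ne_zero_iff.2 hf), ← ih]
      abel

lemma norm_sub_mul_pSeq_mul (a : A) (m : ℕ) :
    ‖a - a * pSeq a m * a‖ =
      ‖fSeq a (m + 1)‖ / ((List.range (m + 1)).map fun k => ‖fSeq a k‖).prod := by
  rw [sub_mul_pSeq_mul, norm_smul, norm_inv,
    Real.norm_of_nonneg (List.prod_nonneg (by simp)), inv_mul_eq_div]

lemma mul_norm_smul_one_sub_eq_cfc {b : A} (hb : IsSelfAdjoint b) :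
    b * (‖b‖ • 1 - b) = cfc (fun t : ℝ => t * (‖b‖ - t)) b := by
  rw [cfc_mul _ _ b, cfc_sub _ _ b, cfc_const _ b, cfc_id' ℝ b, Algebra.algebraMap_eq_smul_one]

end

lemma div_prod_range_le_of_le_sq_div_four {x : ℕ → ℝ} (hx0 : ∀ k, 0 ≤ x k)
    (hx : ∀ k, x (k + 1) ≤ x k ^ 2 / 4) (m : ℕ) :
    x m / ((List.range m).map x).prod ≤ 1 / 4 ^ m * x 0 := by
  induction m with
  | zero => simp
  | succ m ih =>
    have hP : 0 ≤ ((List.range m).map x).prod := List.prod_nonneg (by simpa using fun k _ => hx0 k)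
    rw [List.prod_range_succ]
    calc x (m + 1) / (((List.range m).map x).prod * x m)
        ≤ x m ^ 2 / 4 / (((List.range m).map x).prod * x m) :=
          div_le_div_of_nonneg_right (hx m) (mul_nonneg hP (hx0 m))
      _ = x m / ((List.range m).map x).prod / 4 := by
          rcases eq_or_ne (x m) 0 with h | h
          · simp [h]
          · field_simp
      _ ≤ 1 / 4 ^ m * x 0 / 4 := by gcongr
      _ = 1 / 4 ^ (m + 1) * x 0 := by ring

section

open Filter Topology

variable {A : Type*} [CStarAlgebra A] [PartialOrder A] [StarOrderedRing A]

lemma mem_Icc_norm_of_mem_spectrum {b : A} (hb : 0 ≤ b) {x : ℝ} (hx : x ∈ spectrum ℝ b) :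
    x ∈ Set.Icc 0 ‖b‖ :=
  ⟨spectrum_nonneg_of_nonneg hb hx,
    (le_algebraMap_iff_spectrum_le hb.isSelfAdjoint).1
      ((CStarAlgebra.norm_le_iff_le_algebraMap b (norm_nonneg b) hb).1 le_rfl) x hx⟩

lemma mul_norm_smul_one_sub_nonneg {b : A} (hb : 0 ≤ b) : 0 ≤ b * (‖b‖ • 1 - b) := by
  rw [mul_norm_smul_one_sub_eq_cfc hb.isSelfAdjoint]
  refine cfc_nonneg fun x hx => ?_
  obtain ⟨h0, h1⟩ := mem_Icc_norm_of_mem_spectrum hb hx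
  exact mul_nonneg h0 (sub_nonneg.2 h1)

lemma norm_mul_norm_smul_one_sub_le {b : A} (hb : 0 ≤ b) :
    ‖b * (‖b‖ • 1 - b)‖ ≤ ‖b‖ ^ 2 / 4 := by
  rw [mul_norm_smul_one_sub_eq_cfc hb.isSelfAdjoint]
  refine norm_cfc_le (by positivity) fun x hx => ?_
  obtain ⟨h0, h1⟩ := mem_Icc_norm_of_mem_spectrum hb hx
  rw [Real.norm_of_nonneg (mul_nonneg h0 (sub_nonneg.2 h1))]
  nlinarith [sq_nonneg (x - ‖b‖ / 2)]

lemma fSeq_nonneg {a : A} (ha : 0 ≤ a) : ∀ m, 0 ≤ fSeq a m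
  | 0 => ha
  | m + 1 => mul_norm_smul_one_sub_nonneg (fSeq_nonneg ha m)

lemma norm_fSeq_succ_le {a : A} (ha : 0 ≤ a) (m : ℕ) : ‖fSeq a (m + 1)‖ ≤ ‖fSeq a m‖ ^ 2 / 4 :=
  norm_mul_norm_smul_one_sub_le (fSeq_nonneg ha m)

lemma norm_fSeq_succ_div_prod_le {a : A} (ha : 0 ≤ a) (m : ℕ) :
    ‖fSeq a (m + 1)‖ / ((List.range (m + 1)).map fun k => ‖fSeq a k‖).prod ≤
      1 / 4 ^ (m + 1) * ‖a‖ :=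
  div_prod_range_le_of_le_sq_div_four (fun _ => norm_nonneg _) (norm_fSeq_succ_le ha) (m + 1)

lemma tendsto_mul_pSeq_mul {a : A} (ha : 0 ≤ a) :
    Tendsto (fun m => a * pSeq a m * a) atTop (𝓝 a) := by
  rw [tendsto_iff_norm_sub_tendsto_zero]
  have hbound : Tendsto (fun m : ℕ => (1 / 4 : ℝ) ^ (m + 1) * ‖a‖) atTop (𝓝 0) := by
    simpa using ((tendsto_pow_atTop_nhds_zero_of_lt_one (by norm_num : (0 : ℝ) ≤ 1 / 4)
      (by norm_num)).comp (tendsto_add_atTop_nat 1)).mul_const ‖a‖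
  refine squeeze_zero (fun _ => norm_nonneg _) (fun m => ?_) hbound
  rw [norm_sub_rev, norm_sub_mul_pSeq_mul, div_pow, one_pow]
  exact norm_fSeq_succ_div_prod_le ha m

end

open Filter in
theorem mul_pSeq_mul_tendsto_of_infinite_spectrum_general {H : Type*}
    [NormedAddCommGroup H] [InnerProductSpace ℂ H] [CompleteSpace H]
    (a : H →L[ℂ] H) (ha : 0 ≤ a) :
    (∀ m : ℕ,
      ‖a - a * pSeq a m * a‖ ≤
          ‖fSeq a (m + 1)‖ / ((List.range (m + 1)).map fun k => ‖fSeq a k‖).prod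
        ∧ ‖fSeq a (m + 1)‖ / ((List.range (m + 1)).map fun k => ‖fSeq a k‖).prod ≤
            (1 / 4 ^ (m + 1)) * ‖a‖)
      ∧ Tendsto (fun m : ℕ => a * pSeq a m * a) atTop (nhds a) :=
  ⟨fun m => ⟨(norm_sub_mul_pSeq_mul a m).le, norm_fSeq_succ_div_prod_le ha m⟩,
    tendsto_mul_pSeq_mul ha⟩

open Filter in
/-- For a positive operator `a` with infinite spectrum,
`‖a − a·p_m(a)·a‖ ≤ ‖f_{m+1}(a)‖/(∏_{k=0}^m ‖f_k(a)‖) ≤ ‖a‖/4^{m+1}` for every `m`;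
consequently `a·p_m(a)·a → a` in the operator norm. -/
theorem mul_pSeq_mul_tendsto_of_infinite_spectrum {H : Type*}
    [NormedAddCommGroup H] [InnerProductSpace ℂ H] [CompleteSpace H]
    (a : H →L[ℂ] H) (ha : 0 ≤ a) (hinf : (spectrum ℂ a).Infinite) :
    (∀ m : ℕ,
      ‖a - a * pSeq a m * a‖ ≤
          ‖fSeq a (m + 1)‖ / ((List.range (m + 1)).map fun k => ‖fSeq a k‖).prod
        ∧ ‖fSeq a (m + 1)‖ / ((List.range (m + 1)).map fun k => ‖fSeq a k‖).prod ≤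
            (1 / 4 ^ (m + 1)) * ‖a‖)
      ∧ Tendsto (fun m : ℕ => a * pSeq a m * a) atTop (nhds a) :=
  mul_pSeq_mul_tendsto_of_infinite_spectrum_general a ha
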